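/- (Identification without orientation.) Let q ≥ 1 and ℓ ≥ 1, and suppose ℓ divides k. Then the maximum n for which there exists an identification colouring of n eBugs with k LEDs in q colours equals Z(q,ℓ), the number of orbits of the cyclic rotation action on words of length ℓ: rotation ρ acts on (ZMod ℓ → Fin q) by (ρ w) j = w (j + 1), and Z(q,ℓ) is the number of orbits of the group generated by ρ. -/

import Mathlib

/-- An identification colouring: `ℓ`-windows on distinct eBugs never coincide
(windows within a single eBug may coincide). -/
def idValid (q k ℓ n : ℕ) (c : Fin n → ZMod k → Fin q) : Prop :=
  ∀ i i' : Fin n, i ≠ i' → ∀ j j' : ZMod k,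
    (fun s : Fin ℓ => c i (j + (s : ℕ))) ≠ (fun s : Fin ℓ => c i' (j' + (s : ℕ)))

/-- Left rotation of a word of length `ℓ` over `q` colours. -/
def rot (q ℓ : ℕ) (w : ZMod ℓ → Fin q) : ZMod ℓ → Fin q := fun j => w (j + 1)

/-- Two words are related if some rotation of the first equals the second;
the quotient by (the equivalence closure of) this relation is the set of necklaces. -/
def rotRel (q ℓ : ℕ) (w w' : ZMod ℓ → Fin q) : Prop :=
  ∃ i : ℕ, (rot q ℓ)^[i] w = w'

/-- `Z(q,ℓ)`: the number of orbits of cyclic rotation on words of length `ℓ`. -/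
noncomputable def necklaceCount (q ℓ : ℕ) : ℕ := Nat.card (Quot (rotRel q ℓ))

/-!
Lower bound: give each necklace its own eBug, coloured `ℓ`-periodically by a representative word;
the windows of that eBug are exactly the rotations of the word.

Upper bound, after Mykkeltveit: with `ζ = exp (2πi/ℓ)`, give the window of a colouring `c` at `j`
the weight `W j = ∑_{s<ℓ} c (j+s) ζ^s`. Then `ζ W (j+1) = W j + (c (j+ℓ) - c j)` and `∑_j W j = 0`.
A step from `Im W j ≥ 0` to `Im W (j+1) < 0` puts `W (j+1)` in the half-open sector
`-2π/ℓ ≤ arg < 0`; if this never happens, the imaginary parts, summing to `0`, all vanish, then so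
do the weights, and `c` is `ℓ`-periodic. Rotating a word multiplies its weight by a power of `ζ`,
so each necklace has at most one word with weight in the sector. Sending each eBug to the necklace
of such a window (or of any window, when its colouring is `ℓ`-periodic and so covers a whole
necklace) is injective.
-/

open Complex Finset

theorem ZMod.forall_of_add_one {k : ℕ} [NeZero k] {P : ZMod k → Prop} {j₀ : ZMod k}
    (h₀ : P j₀) (hstep : ∀ j, P j → P (j + 1)) (j : ZMod k) : P j := by
  have hnat : ∀ n : ℕ, P (j₀ + n) := fun n => by
    induction n with
    | zero => simpa using h₀
    | succ n ih => simpa [add_assoc] using hstep _ ih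
  simpa using hnat (j - j₀).val

theorem ZMod.eq_zero_of_sum_eq_zero_of_nonneg_add_one {k : ℕ} [NeZero k] {f : ZMod k → ℝ}
    (hsum : ∑ j, f j = 0) (hstep : ∀ j, 0 ≤ f j → 0 ≤ f (j + 1)) (j : ZMod k) : f j = 0 := by
  obtain ⟨j₀, -, hj₀⟩ := exists_le_of_sum_le (f := 0) (g := f) univ_nonempty
    (by simpa using hsum.ge)
  have hnonneg : ∀ j, 0 ≤ f j := ZMod.forall_of_add_one (P := fun j => 0 ≤ f j) hj₀ hstep
  exact (sum_eq_zero_iff_of_nonneg fun j _ => hnonneg j).mp hsum j (mem_univ j)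

namespace Mykkeltveit

noncomputable def theta (ℓ : ℕ) : ℝ := 2 * Real.pi / ℓ

noncomputable def zeta (ℓ : ℕ) : ℂ := exp (theta ℓ * I)

theorem isPrimitiveRoot_zeta {ℓ : ℕ} (hℓ : ℓ ≠ 0) : IsPrimitiveRoot (zeta ℓ) ℓ := by
  convert Complex.isPrimitiveRoot_exp ℓ hℓ using 2
  rw [zeta, theta]
  push_cast
  congr 1
  ring

theorem zeta_pow_self (ℓ : ℕ) : zeta ℓ ^ ℓ = 1 := by
  rcases eq_or_ne ℓ 0 with rfl | hℓ
  · exact pow_zero _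
  · exact (isPrimitiveRoot_zeta hℓ).pow_eq_one

theorem zeta_two : zeta 2 = -1 := by
  rw [zeta, theta, show 2 * Real.pi / ((2 : ℕ) : ℝ) = Real.pi by norm_num]
  exact exp_pi_mul_I

theorem theta_pos {ℓ : ℕ} (hℓ : ℓ ≠ 0) : 0 < theta ℓ := by
  unfold theta; positivity

theorem theta_lt_pi {ℓ : ℕ} (hℓ : 3 ≤ ℓ) : theta ℓ < Real.pi := by
  have : (3 : ℝ) ≤ ℓ := by exact_mod_cast hℓ
  rw [theta, div_lt_iff₀ (by linarith)]
  nlinarith [Real.pi_pos]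

theorem im_exp_mul_I_mul (x : ℝ) (z : ℂ) :
    (exp (x * I) * z).im = ‖z‖ * Real.sin (z.arg + x) := by
  rw [mul_im, exp_ofReal_mul_I_re, exp_ofReal_mul_I_im, Real.sin_add,
    ← norm_mul_cos_arg z, ← norm_mul_sin_arg z]
  ring

/-- `zeta ℓ * z` has argument in `[0, 2π/ℓ)`, i.e. `z` lies in the half-open sector
`[-2π/ℓ, 0)` taken mod `2π`; the rotations of this sector by powers of `zeta ℓ` partition
`ℂ ∖ {0}`. For `ℓ = 1` the sector is the whole plane. -/
def InSector (ℓ : ℕ) (z : ℂ) : Prop :=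
  ℓ = 1 ∨ (z ≠ 0 ∧ (zeta ℓ * z).arg ∈ Set.Ico 0 (theta ℓ))

theorem inSector_of_im_neg {ℓ : ℕ} {z : ℂ} (hz : z.im < 0) (hζz : 0 ≤ (zeta ℓ * z).im) :
    InSector ℓ z := by
  refine Or.inr ⟨fun h => by simp [h] at hz, arg_nonneg_iff.mpr hζz, ?_⟩
  by_contra! h
  have hθ : 0 ≤ theta ℓ := by unfold theta; positivity
  have hz' : z = exp ((-theta ℓ : ℝ) * I) * (zeta ℓ * z) := by
    rw [zeta, ← mul_assoc, ← exp_add]; push_cast; simp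
  have : 0 ≤ z.im := by
    rw [hz', im_exp_mul_I_mul]
    exact mul_nonneg (norm_nonneg _) (Real.sin_nonneg_of_nonneg_of_le_pi (by linarith)
      (by linarith [arg_le_pi (zeta ℓ * z)]))
  linarith

theorem inSector_two_of_re_neg {z : ℂ} (him : z.im = 0) (hre : z.re < 0) : InSector 2 z := by
  have harg : (zeta 2 * z).arg = 0 := by
    rw [zeta_two, neg_one_mul, arg_eq_zero_iff, neg_re, neg_im, him, neg_zero]
    exact ⟨by linarith, rfl⟩
  exact Or.inr ⟨fun h => by simp [h] at hre, by rw [harg]; exact ⟨le_rfl, theta_pos two_ne_zero⟩⟩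

theorem dvd_of_arg_mem_Ico {ℓ m : ℕ} {w : ℂ} (hw : w ≠ 0) (h : w.arg ∈ Set.Ico 0 (theta ℓ))
    (h' : (zeta ℓ ^ m * w).arg ∈ Set.Ico 0 (theta ℓ)) : ℓ ∣ m := by
  obtain ⟨ha₀, haθ⟩ := h
  obtain ⟨hb₀, hbθ⟩ := h'
  have hℓ : ℓ ≠ 0 := by rintro rfl; rw [show theta 0 = 0 by simp [theta]] at haθ; linarith
  have hexp : exp ((zeta ℓ ^ m * w).arg * I) = exp ((m * theta ℓ + w.arg : ℝ) * I) := by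
    have h := norm_mul_exp_arg_mul_I (zeta ℓ ^ m * w)
    rw [norm_mul, norm_pow, zeta, norm_exp_ofReal_mul_I, one_pow, one_mul] at h
    conv_rhs at h => rw [← norm_mul_exp_arg_mul_I w, ← exp_nat_mul, mul_left_comm, ← exp_add]
    refine mul_left_cancel₀ (by exact_mod_cast norm_ne_zero_iff.mpr hw) (h.trans ?_)
    push_cast
    ring_nf
  obtain ⟨n, hn⟩ := exp_eq_exp_iff_exists_int.mp hexp
  have hdiff : (zeta ℓ ^ m * w).arg - w.arg = ((m + n * ℓ : ℤ) : ℝ) * theta ℓ := by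
    have harg : (zeta ℓ ^ m * w).arg = m * theta ℓ + w.arg + n * (2 * Real.pi) := by
      refine ofReal_injective (mul_right_cancel₀ I_ne_zero ?_)
      push_cast at hn ⊢
      linear_combination hn
    have hθ : theta ℓ * ℓ = 2 * Real.pi := by
      rw [theta]
      field_simp
    push_cast
    linear_combination harg - n * hθ
  have hN : |((m + n * ℓ : ℤ) : ℝ)| < 1 := by
    have hθ := theta_pos hℓ
    rw [abs_lt]
    constructor <;> nlinarith
  have hN0 : (m : ℤ) + n * ℓ = 0 := Int.abs_lt_one_iff.mp (by exact_mod_cast hN)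
  exact Int.natCast_dvd_natCast.mp ⟨-n, by linear_combination hN0⟩

theorem dvd_of_inSector {ℓ m : ℕ} {z : ℂ} (hz : InSector ℓ z)
    (hz' : InSector ℓ (zeta ℓ ^ m * z)) : ℓ ∣ m := by
  rcases hz with rfl | ⟨hz0, hz⟩
  · exact one_dvd m
  rcases hz' with rfl | ⟨-, hz'⟩
  · exact one_dvd m
  refine dvd_of_arg_mem_Ico (mul_ne_zero (exp_ne_zero _) hz0) hz ?_
  rwa [mul_left_comm]

noncomputable def windowWeight {k : ℕ} (ℓ : ℕ) (c : ZMod k → ℝ) (j : ZMod k) : ℂ :=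
  ∑ s ∈ range ℓ, (c (j + s) : ℂ) * zeta ℓ ^ s

section Weight
variable {k ℓ : ℕ} (c : ZMod k → ℝ)

theorem zeta_mul_windowWeight_add_one (j : ZMod k) :
    zeta ℓ * windowWeight ℓ c (j + 1) = windowWeight ℓ c j + (c (j + ℓ) - c j : ℝ) := by
  set f : ℕ → ℂ := fun s => (c (j + s) : ℂ) * zeta ℓ ^ s
  have h := (sum_range_succ' f ℓ).symm.trans (sum_range_succ f ℓ)
  simp only [f, Nat.cast_zero, add_zero, pow_zero, mul_one, zeta_pow_self] at h
  have shift : zeta ℓ * windowWeight ℓ c (j + 1) = ∑ s ∈ range ℓ, f (s + 1) := by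
    rw [windowWeight, mul_sum]
    refine sum_congr rfl fun s _ => ?_
    simp only [f]; push_cast; ring_nf
  rw [shift, windowWeight]
  push_cast
  linear_combination h

theorem im_zeta_mul_windowWeight_add_one (j : ZMod k) :
    (zeta ℓ * windowWeight ℓ c (j + 1)).im = (windowWeight ℓ c j).im := by
  simp [zeta_mul_windowWeight_add_one]

theorem zeta_pow_mul_windowWeight_of_periodic (hc : Function.Periodic c ℓ) (j : ZMod k) (m : ℕ) :
    zeta ℓ ^ m * windowWeight ℓ c (j + m) = windowWeight ℓ c j := by
  induction m with
  | zero => simp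
  | succ m ih =>
    rw [pow_succ, mul_assoc, Nat.cast_succ, ← add_assoc, zeta_mul_windowWeight_add_one,
      hc, sub_self, ofReal_zero, add_zero, ih]

theorem sum_windowWeight [NeZero k] (hℓ : 1 < ℓ) : ∑ j, windowWeight ℓ c j = 0 := by
  have hshift : ∀ s : ℕ, ∑ j : ZMod k, (c (j + s) : ℂ) = ∑ j, (c j : ℂ) := fun s =>
    Fintype.sum_equiv (Equiv.addRight (s : ZMod k)) _ _ fun _ => rfl
  simp_rw [windowWeight]
  rw [sum_comm]
  simp_rw [← sum_mul, hshift, ← mul_sum, (isPrimitiveRoot_zeta (by omega)).geom_sum_eq_zero hℓ,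
    mul_zero]

theorem windowWeight_eq_zero_of_forall_not_inSector [NeZero k] (hℓ : 2 ≤ ℓ)
    (h : ∀ j, ¬ InSector ℓ (windowWeight ℓ c j)) (j : ZMod k) : windowWeight ℓ c j = 0 := by
  set W := windowWeight ℓ c
  have hsum := sum_windowWeight c (ℓ := ℓ) hℓ
  have him : ∀ j, (W j).im = 0 := by
    refine ZMod.eq_zero_of_sum_eq_zero_of_nonneg_add_one (by simpa using congrArg im hsum)
      fun j hj => ?_
    by_contra! hlt
    exact h (j + 1) (inSector_of_im_neg hlt (by rwa [im_zeta_mul_windowWeight_add_one]))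
  rcases hℓ.eq_or_lt with rfl | hℓ3
  · have hre : ∀ j, (W j).re = 0 := by
      refine ZMod.eq_zero_of_sum_eq_zero_of_nonneg_add_one (by simpa using congrArg re hsum)
        fun j _ => ?_
      by_contra! hlt
      exact h (j + 1) (inSector_two_of_re_neg (him (j + 1)) hlt)
    exact Complex.ext (hre j) (him j)
  · have hsin : 0 < (zeta ℓ).im := by
      rw [zeta, exp_ofReal_mul_I_im]
      exact Real.sin_pos_of_pos_of_lt_pi (theta_pos (by omega)) (theta_lt_pi hℓ3)
    have hre : (W j).re = 0 := by
      have h' := im_zeta_mul_windowWeight_add_one c (ℓ := ℓ) (j - 1)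
      rw [sub_add_cancel, mul_im, him, him, mul_zero, zero_add] at h'
      exact (mul_eq_zero.mp h').resolve_left hsin.ne'
    exact Complex.ext hre (him j)

theorem exists_inSector_or_periodic [NeZero k] :
    (∃ j, InSector ℓ (windowWeight ℓ c j)) ∨ Function.Periodic c ℓ := by
  rcases Nat.lt_or_ge ℓ 2 with hℓ | hℓ
  · interval_cases ℓ
    · exact Or.inr fun x => by simp
    · exact Or.inl ⟨0, Or.inl rfl⟩
  refine or_iff_not_imp_left.mpr fun h j => ?_
  rw [not_exists] at h
  have hW := windowWeight_eq_zero_of_forall_not_inSector c hℓ h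
  simpa [hW, sub_eq_zero, eq_comm] using zeta_mul_windowWeight_add_one c (ℓ := ℓ) j

end Weight

end Mykkeltveit

open Mykkeltveit

section Rotation
variable {q ℓ : ℕ}

theorem rot_iterate (m : ℕ) (w : ZMod ℓ → Fin q) : (rot q ℓ)^[m] w = fun t => w (t + m) := by
  induction m generalizing w with
  | zero => simp
  | succ m ih =>
    rw [Function.iterate_succ_apply, ih]
    simp only [rot, Nat.cast_succ, add_assoc]

theorem rotRel_iff [NeZero ℓ] {w w' : ZMod ℓ → Fin q} :
    rotRel q ℓ w w' ↔ ∃ a : ZMod ℓ, (fun t => w (t + a)) = w' := by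
  simp only [rotRel, rot_iterate]
  exact ⟨fun ⟨m, h⟩ => ⟨m, h⟩, fun ⟨a, h⟩ => ⟨a.val, by rwa [ZMod.natCast_zmod_val]⟩⟩

theorem rotRel_equivalence [NeZero ℓ] : Equivalence (rotRel q ℓ) where
  refl _ := rotRel_iff.mpr ⟨0, by simp⟩
  symm h := by
    obtain ⟨a, rfl⟩ := rotRel_iff.mp h
    exact rotRel_iff.mpr ⟨-a, by simp⟩
  trans h h' := by
    obtain ⟨a, rfl⟩ := rotRel_iff.mp h
    obtain ⟨b, rfl⟩ := rotRel_iff.mp h'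
    exact rotRel_iff.mpr ⟨b + a, by simp [add_assoc]⟩

def IsSelected (w : ZMod ℓ → Fin q) : Prop :=
  InSector ℓ (windowWeight ℓ (fun t => (w t : ℝ)) 0)

theorem dvd_of_isSelected {w : ZMod ℓ → Fin q} {m : ℕ} (hw : IsSelected w)
    (hw' : IsSelected ((rot q ℓ)^[m] w)) : ℓ ∣ m := by
  have hperiodic : Function.Periodic (fun t => (w t : ℝ)) ℓ := fun t => by simp
  unfold IsSelected at hw hw'
  refine dvd_of_inSector hw' ?_
  rw [← zeta_pow_mul_windowWeight_of_periodic _ hperiodic 0 m] at hw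
  simpa [rot_iterate, windowWeight, add_comm] using hw

theorem eq_of_isSelected_of_rotRel {w w' : ZMod ℓ → Fin q} (hw : IsSelected w)
    (hw' : IsSelected w') (h : rotRel q ℓ w w') : w = w' := by
  obtain ⟨m, rfl⟩ := h
  have hm : (m : ZMod ℓ) = 0 := (ZMod.natCast_eq_zero_iff m ℓ).mpr (dvd_of_isSelected hw hw')
  simp [rot_iterate, hm]

end Rotation

def window {α : Type*} {k : ℕ} (ℓ : ℕ) (c : ZMod k → α) (j : ZMod k) : ZMod ℓ → α :=
  fun t => c (j + t.val)

section Windows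
variable {q k ℓ : ℕ}

theorem windowWeight_window (c : ZMod k → Fin q) (j : ZMod k) :
    windowWeight ℓ (fun t => ((window ℓ c j t : Fin q) : ℝ)) 0 =
      windowWeight ℓ (fun i => (c i : ℝ)) j := by
  refine sum_congr rfl fun s hs => ?_
  simp only [zero_add, window, ZMod.val_natCast_of_lt (mem_range.mp hs)]

theorem exists_window_isSelected_or_periodic [NeZero k] (c : ZMod k → Fin q) :
    ∃ j, IsSelected (window ℓ c j) ∨ Function.Periodic c ℓ := by
  rcases exists_inSector_or_periodic (ℓ := ℓ) fun i => (c i : ℝ) with ⟨j, hj⟩ | hc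
  · exact ⟨j, Or.inl (by rwa [IsSelected, windowWeight_window])⟩
  · exact ⟨0, Or.inr fun x => Fin.ext (Nat.cast_injective (R := ℝ) (hc x))⟩

theorem window_add_of_periodic [NeZero ℓ] {α : Type*} {c : ZMod k → α}
    (hc : Function.Periodic c ℓ) (j : ZMod k) (a : ZMod ℓ) :
    (fun t => window ℓ c j (t + a)) = window ℓ c (j + a.val) := by
  have hnat : Function.Periodic (fun x : ℕ => c (j + x)) ℓ := fun x => by
    simpa [add_assoc] using hc (j + x)
  funext t
  simp only [window, ZMod.val_add]
  rw [hnat.map_mod_nat, Nat.cast_add, add_comm (t.val : ZMod k), add_assoc]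

theorem exists_window_eq_of_rotRel [NeZero ℓ] {c c' : ZMod k → Fin q} {j j' : ZMod k}
    (hc : IsSelected (window ℓ c j) ∨ Function.Periodic c ℓ)
    (hc' : IsSelected (window ℓ c' j') ∨ Function.Periodic c' ℓ)
    (h : rotRel q ℓ (window ℓ c j) (window ℓ c' j')) :
    ∃ a a', window ℓ c a = window ℓ c' a' := by
  rcases hc' with hsel' | hper'
  · rcases hc with hsel | hper
    · exact ⟨j, j', eq_of_isSelected_of_rotRel hsel hsel' h⟩
    · obtain ⟨b, hb⟩ := rotRel_iff.mp h
      exact ⟨j + b.val, j', by rw [← window_add_of_periodic hper, hb]⟩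
  · obtain ⟨b, hb⟩ := rotRel_iff.mp (rotRel_equivalence.symm h)
    exact ⟨j, j' + b.val, by rw [← window_add_of_periodic hper', hb]⟩

theorem window_ne_of_idValid {n : ℕ} {c : Fin n → ZMod k → Fin q} (hc : idValid q k ℓ n c)
    {i i' : Fin n} (hi : i ≠ i') (j j' : ZMod k) : window ℓ (c i) j ≠ window ℓ (c i') j' := by
  intro h
  refine hc i i' hi j j' (funext fun s => ?_)
  simpa [window, ZMod.val_natCast_of_lt s.isLt] using congrFun h (s : ℕ)

theorem le_necklaceCount_of_idValid [NeZero k] [NeZero ℓ] {n : ℕ} {c : Fin n → ZMod k → Fin q}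
    (hc : idValid q k ℓ n c) : n ≤ necklaceCount q ℓ := by
  choose j hj using fun i => exists_window_isSelected_or_periodic (ℓ := ℓ) (c i)
  have hinj : Function.Injective fun i => Quot.mk (rotRel q ℓ) (window ℓ (c i) (j i)) := by
    intro i i' h
    by_contra hi
    obtain ⟨a, a', ha⟩ := exists_window_eq_of_rotRel (hj i) (hj i')
      (rotRel_equivalence.eqvGen_iff.mp (Quot.eqvGen_exact h))
    exact window_ne_of_idValid hc hi a a' ha
  simpa [necklaceCount] using Nat.card_le_card_of_injective _ hinj

theorem idValid_of_rotRel_imp_eq [NeZero ℓ] (hdvd : ℓ ∣ k) {n : ℕ} (w : Fin n → ZMod ℓ → Fin q)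
    (hw : ∀ i i', rotRel q ℓ (w i) (w i') → i = i') :
    idValid q k ℓ n fun i j => w i (ZMod.castHom hdvd (ZMod ℓ) j) := by
  intro i i' hi j j' h
  apply hi (hw i i' (rotRel_iff.mpr ⟨ZMod.castHom hdvd _ j - ZMod.castHom hdvd _ j', ?_⟩))
  funext t
  have := congrFun h ⟨(t - ZMod.castHom hdvd _ j').val, ZMod.val_lt _⟩
  simp only [map_add, map_natCast, ZMod.natCast_zmod_val] at this
  rw [← sub_add_cancel t (ZMod.castHom hdvd _ j'), add_comm _ (ZMod.castHom hdvd _ j'), ← this]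
  congr 1
  ring

theorem exists_idValid_necklaceCount [NeZero ℓ] (hdvd : ℓ ∣ k) :
    ∃ c, idValid q k ℓ (necklaceCount q ℓ) c := by
  let e : Quot (rotRel q ℓ) ≃ Fin (necklaceCount q ℓ) := Finite.equivFinOfCardEq rfl
  refine ⟨_, idValid_of_rotRel_imp_eq hdvd (fun i => (e.symm i).out) fun i i' h => ?_⟩
  simpa using congrArg e (Quot.sound h)

end Windows

theorem stmt18_general (q k ℓ : ℕ) (hk : 1 ≤ k) (hdvd : ℓ ∣ k) :
    IsGreatest {n : ℕ | ∃ c : Fin n → ZMod k → Fin q, idValid q k ℓ n c}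
      (necklaceCount q ℓ) := by
  have : NeZero k := ⟨by omega⟩
  have : NeZero ℓ := ⟨(Nat.pos_of_dvd_of_pos hdvd hk).ne'⟩
  exact ⟨exists_idValid_necklaceCount hdvd, fun _ ⟨_, hc⟩ => le_necklaceCount_of_idValid hc⟩

/-- **Identification without orientation.** If `ℓ ∣ k`, the greatest `n` admitting an
identification colouring of `n` eBugs with `k` LEDs in `q` colours is the number `Z(q,ℓ)`
of `q`-ary necklaces of length `ℓ`. -/
theorem stmt18 (q k ℓ : ℕ) (hq : 1 ≤ q) (hk : 1 ≤ k) (hℓ : 1 ≤ ℓ) (hdvd : ℓ ∣ k) :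
    IsGreatest {n : ℕ | ∃ c : Fin n → ZMod k → Fin q, idValid q k ℓ n c}
      (necklaceCount q ℓ) :=
  stmt18_general q k ℓ hk hdvd
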